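/- arXiv:2206.14033 — 4 statements merged into one kernel-verified Lean document; each statement's English description precedes it below -/
import Mathlib

section
/- Let T be a finite partial order in which every principal lower set {y : y ≤ x} is a chain (a forest poset), and let ℓ : T → ℕ be a level function, i.e., ℓ x ≤ n for all x, and ℓ x = ℓ y + 1 whenever y covers x. Then there exist a family of types A : Fin (n+1) → Type, maps α i : A (i-1) → Option (A i) for 1 ≤ i ≤ n, and an order isomorphism φ from T onto the associated poset E = Σ i, A i (with (i,a) ≤ (j,b) iff j ≤ i and the partial composite α_{ij} sends b to a) such that ℓ x = (φ x).1 for every x ∈ T. (This is the representation step in the paper's proof that every forest equipped with a level function is of the form ω(A) for a simplex A of Δ_{/Fin_*}.) -/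
/-- The partial composite `α_{ij} : A j → Option (A i)` of the maps
`α_{j+1}, …, α_i` in the `Option` monad (with `α_{jj} = some`);
it is `none` when `j > i`. -/
def alphaComp (A : ℕ → Type) (α : ∀ i, A i → Option (A (i + 1)))
    (j : ℕ) (b : A j) : (i : ℕ) → Option (A i)
  | 0 => if h : j = 0 then some (h ▸ b) else none
  | (i + 1) => if h : j = i + 1 then some (h ▸ b) else (alphaComp A α j b i).bind (α i)

/-- The relation on `E = Σ i, A i` given by `(i,a) ≤ (j,b)` iff `j ≤ i` and
`α_{ij} b = some a`. -/
def edgeLE {n : ℕ} (A : ℕ → Type) (α : ∀ i, A i → Option (A (i + 1)))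
    (x y : Σ i : Fin (n + 1), A i.val) : Prop :=
  y.1 ≤ x.1 ∧ alphaComp A α y.1.val y.2 x.1.val = some x.2


section Aux
variable {T : Type} [Fintype T] [PartialOrder T]

/-- The set of elements at level `j`. -/
def FA (ℓ : T → ℕ) (j : ℕ) : Type := {x : T // ℓ x = j}

lemma exists_min_cov {x y : T} (h : x < y) : ∃ c, x ⋖ c ∧ c ≤ y := by
  have wf : WellFounded ((· < ·) : T → T → Prop) := (Finite.to_wellFoundedLT).wf
  obtain ⟨m, ⟨hm1, hm2⟩, hmin⟩ := wf.has_min {c : T | x < c ∧ c ≤ y} ⟨y, h, le_rfl⟩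
  refine ⟨m, ⟨hm1, fun w hw1 hw2 => ?_⟩, hm2⟩
  exact hmin w ⟨hw1, hw2.le.trans hm2⟩ hw2

lemma exists_max_cov {x y : T} (h : x < y) : ∃ c, x ≤ c ∧ c ⋖ y := by
  have wf : WellFounded ((· > ·) : T → T → Prop) := (Finite.to_wellFoundedGT).wf
  obtain ⟨m, ⟨hm1, hm2⟩, hmin⟩ := wf.has_min {c : T | x ≤ c ∧ c < y} ⟨x, le_rfl, h⟩
  refine ⟨m, hm1, hm2, fun w hw1 hw2 => ?_⟩
  exact hmin w ⟨hm1.trans hw1.le, hw2⟩ hw1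

variable (ℓ : T → ℕ)

lemma level_strict (hlevel : ∀ x y : T, x ⋖ y → ℓ x = ℓ y + 1) :
    ∀ y x : T, x < y → ℓ y < ℓ x := by
  have wf : WellFounded ((· < ·) : T → T → Prop) := (Finite.to_wellFoundedLT).wf
  intro y
  induction y using wf.induction with
  | _ y IH =>
    intro x hx
    obtain ⟨c, hxc, hcy⟩ := exists_max_cov hx
    have hc : ℓ c = ℓ y + 1 := hlevel _ _ hcy
    rcases eq_or_lt_of_le hxc with rfl | hlt
    · omega
    · have := IH c hcy.lt x hlt
      omega

lemma level_mono (hlevel : ∀ x y : T, x ⋖ y → ℓ x = ℓ y + 1)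
    {x y : T} (h : x ≤ y) : ℓ y ≤ ℓ x := by
  rcases eq_or_lt_of_le h with rfl | h
  · exact le_rfl
  · exact (level_strict ℓ hlevel y x h).le

lemma cov_unique (hforest : ∀ x y z : T, y ≤ x → z ≤ x → y ≤ z ∨ z ≤ y)
    {a b c : T} (h1 : a ⋖ c) (h2 : b ⋖ c) : a = b := by
  rcases hforest c a b h1.le h2.le with h | h
  · rcases eq_or_lt_of_le h with rfl | h
    · rfl
    · exact absurd h2.lt (h1.2 h)
  · rcases eq_or_lt_of_le h with rfl | h
    · rfl
    · exact absurd h1.lt (h2.2 h)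

open Classical in
/-- The structure map: send `c` to the unique element it covers, if any. -/
noncomputable def falpha (hlevel : ∀ x y : T, x ⋖ y → ℓ x = ℓ y + 1)
    (i : ℕ) (c : FA ℓ i) : Option (FA ℓ (i + 1)) :=
  if h : ∃ a : T, a ⋖ c.1 then
    some ⟨h.choose, by rw [hlevel _ _ h.choose_spec, c.2]⟩
  else none

lemma falpha_eq_some (hlevel : ∀ x y : T, x ⋖ y → ℓ x = ℓ y + 1)
    (hforest : ∀ x y z : T, y ≤ x → z ≤ x → y ≤ z ∨ z ≤ y)
    {i : ℕ} {c : FA ℓ i} {a : FA ℓ (i + 1)} :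
    falpha ℓ hlevel i c = some a ↔ a.1 ⋖ c.1 := by
  unfold falpha
  constructor
  · intro h
    split_ifs at h with hc
    · obtain rfl : a = ⟨hc.choose, _⟩ := (Option.some_inj.mp h).symm
      exact hc.choose_spec
  · intro hac
    have hc : ∃ a : T, a ⋖ c.1 := ⟨a.1, hac⟩
    rw [dif_pos hc]
    exact congrArg some (Subtype.ext (cov_unique hforest hc.choose_spec hac))

lemma alphaComp_eq_some_iff (hlevel : ∀ x y : T, x ⋖ y → ℓ x = ℓ y + 1)
    (hforest : ∀ x y z : T, y ≤ x → z ≤ x → y ≤ z ∨ z ≤ y) :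
    ∀ (k j : ℕ) (b : FA ℓ j) (a : FA ℓ k),
      alphaComp (FA ℓ) (falpha ℓ hlevel) j b k = some a ↔ a.1 ≤ b.1 := by
  intro k
  induction k with
  | zero =>
    intro j b a
    show (if h : j = 0 then some (h ▸ b) else none) = some a ↔ _
    split_ifs with h
    · subst h
      simp only [Option.some_inj]
      constructor
      · rintro rfl; exact le_rfl
      · intro hab
        rcases eq_or_lt_of_le hab with he | hlt
        · exact (Subtype.ext he).symm
        · have := level_strict ℓ hlevel _ _ hlt
          rw [a.2, b.2] at this; omega
    · simp only [reduceCtorEq, false_iff]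
      intro hab
      have := level_mono ℓ hlevel hab
      rw [a.2, b.2] at this; omega
  | succ k IH =>
    intro j b a
    show (if h : j = k + 1 then some (h ▸ b) else _) = some a ↔ _
    split_ifs with h
    · subst h
      simp only [Option.some_inj]
      constructor
      · rintro rfl; exact le_rfl
      · intro hab
        rcases eq_or_lt_of_le hab with he | hlt
        · exact (Subtype.ext he).symm
        · have := level_strict ℓ hlevel _ _ hlt
          rw [a.2, b.2] at this; omega
    · rw [Option.bind_eq_some_iff]
      constructor
      · rintro ⟨c, hc1, hc2⟩
        have h1 := (IH j b c).mp hc1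
        have h2 := (falpha_eq_some ℓ hlevel hforest).mp hc2
        exact h2.le.trans h1
      · intro hab
        have hne : a.1 ≠ b.1 := by
          intro he
          have : ℓ a.1 = ℓ b.1 := by rw [he]
          rw [a.2, b.2] at this; omega
        obtain ⟨c, hac, hcb⟩ := exists_min_cov (lt_of_le_of_ne hab hne)
        have hlc : ℓ c = k := by
          have := hlevel _ _ hac; rw [a.2] at this; omega
        refine ⟨⟨c, hlc⟩, (IH j b ⟨c, hlc⟩).mpr hcb, ?_⟩
        exact (falpha_eq_some ℓ hlevel hforest).mpr hac

end Aux

/-- Every finite forest poset `T` equipped with a level function `ℓ : T → ℕ`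
(bounded by `n`, with `ℓ x = ℓ y + 1` whenever `y` covers `x`) is order
isomorphic, compatibly with the levels, to the edge poset `E = Σ i, A i`
of a level forest `ω(A)` for suitable `A` and `α`. -/


theorem forest_with_level_is_levelForest (n : ℕ) (T : Type) [Fintype T]
    [PartialOrder T]
    (hforest : ∀ x y z : T, y ≤ x → z ≤ x → y ≤ z ∨ z ≤ y)
    (ℓ : T → ℕ) (hbound : ∀ x : T, ℓ x ≤ n)
    (hlevel : ∀ x y : T, x ⋖ y → ℓ x = ℓ y + 1) :
    ∃ (A : ℕ → Type) (α : ∀ i, A i → Option (A (i + 1)))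
      (φ : T ≃ Σ i : Fin (n + 1), A i.val),
      (∀ x y : T, x ≤ y ↔ edgeLE A α (φ x) (φ y)) ∧
      (∀ x : T, ((φ x).1 : ℕ) = ℓ x) := by
  refine ⟨FA ℓ, falpha ℓ hlevel,
    { toFun := fun x => ⟨⟨ℓ x, Nat.lt_succ_of_le (hbound x)⟩, ⟨x, rfl⟩⟩
      invFun := fun p => p.2.1
      left_inv := fun x => rfl
      right_inv := by
        rintro ⟨⟨i, hi⟩, ⟨x, hx⟩⟩
        dsimp at hx ⊢
        subst hx
        rfl }, ?_, fun x => rfl⟩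
  intro x y
  constructor
  · intro hxy
    refine ⟨?_, (alphaComp_eq_some_iff ℓ hlevel hforest _ _ ⟨y, rfl⟩ ⟨x, rfl⟩).mpr hxy⟩
    exact Fin.mk_le_mk.mpr (level_mono ℓ hlevel hxy)
  · rintro ⟨-, h⟩
    exact (alphaComp_eq_some_iff ℓ hlevel hforest _ _ ⟨y, rfl⟩ ⟨x, rfl⟩).mp h
end

section
/- Let T be a finite forest poset (a finite partial order in which every principal lower set {y : y ≤ x} is a chain) and let L be a subset of the set of maximal elements of T (the designated leaves). Then there exist a finite forest poset T', an order embedding e : T ↪ T', a monotone map r : T' → T with r ∘ e = id, and N : ℕ such that: (i) every element t' of T' not in the image of e satisfies r t' ∈ L and e (r t') < t'; (ii) every maximal element m of T' with r m ∈ L has exactly N elements strictly below it; and (iii) every maximal element m of T' with r m ∉ L lies in the image of e and has fewer than N elements strictly below it. (This is the combinatorial content of the paper's Lemma that every forest F ∈ Φ is a retract of a level forest ω(A): one makes T a retract of a forest T', obtained by grafting finite chains on top of the designated leaves, in which all leaves sit at the same height N and all stumps sit at heights below N.) -/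
/-- A forest with chains grafted on top: `base t` are the original elements,
`chain (t, i) h` is the `i`-th element of the chain grafted above `t`. -/
inductive Graft (T : Type) (P : T × ℕ → Prop) : Type where
  | base : T → Graft T P
  | chain : (p : T × ℕ) → P p → Graft T P

namespace Graft

variable {T : Type} [PartialOrder T] {P : T × ℕ → Prop}

/-- The order relation on the grafted forest. -/
def grle : Graft T P → Graft T P → Prop
  | .base a, .base b => a ≤ b
  | .base a, .chain q _ => a ≤ q.1
  | .chain _ _, .base _ => False
  | .chain p _, .chain q _ => p.1 = q.1 ∧ p.2 ≤ q.2

/-- Retraction to the base forest. -/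
def ret : Graft T P → T
  | .base a => a
  | .chain p _ => p.1

/-- The chain coordinate (0 on base points). -/
def coord : Graft T P → ℕ
  | .base _ => 0
  | .chain p _ => p.2

/-- The grafted partial order. -/
def po (P : T × ℕ → Prop) : PartialOrder (Graft T P) where
  le := grle
  lt x y := grle x y ∧ ¬ grle y x
  lt_iff_le_not_ge _ _ := Iff.rfl
  le_refl x := by cases x <;> simp [grle]
  le_trans x y z h1 h2 := by
    cases x <;> cases y <;> cases z <;> simp only [grle] at h1 h2 ⊢
    · exact h1.trans h2
    · exact h1.trans h2
    · exact h2.1 ▸ h1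
    · exact ⟨h1.1.trans h2.1, h1.2.trans h2.2⟩
  le_antisymm x y h1 h2 := by
    cases x <;> cases y <;> simp only [grle] at h1 h2
    · exact congrArg Graft.base (le_antisymm h1 h2)
    · next p hp q hq =>
        obtain rfl : p = q := Prod.ext h1.1 (le_antisymm h1.2 h2.2)
        rfl

theorem base_injective : Function.Injective (Graft.base (T := T) (P := P)) := by
  intro a b hab
  injection hab

theorem finite [Finite T] (b : ℕ) (hb : ∀ p, P p → p.2 < b) :
    Finite (Graft T P) := by
  refine Finite.of_injective
    (fun x : Graft T P => match x with
      | .base a => (Sum.inl a : T ⊕ (T × Fin b))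
      | .chain p hp => Sum.inr (p.1, ⟨p.2, hb p hp⟩)) ?_
  intro x y hxy
  cases x with
  | base a =>
      cases y with
      | base a' =>
          injection hxy with h1
          exact congrArg Graft.base h1
      | chain p hp => exact (by cases hxy)
  | chain p hp =>
      cases y with
      | base a' => exact (by cases hxy)
      | chain p' hp' =>
          injection hxy with h1
          injection h1 with h2 h3
          injection h3 with h4
          obtain rfl : p = p' := Prod.ext h2 h4
          rfl

end Graft

/-- Every finite forest poset `T` with a set `L` of designated leaves
(maximal elements) is a retract of a finite forest poset `T'`, obtained by
grafting chains on top of the designated leaves, in which all leaves coming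
from `L` sit at the same height `N` and all other maximal elements (the
stumps) come from `T` and sit at heights below `N`. -/
theorem forest_retract_of_levelable (T : Type) [Fintype T] [PartialOrder T]
    (hforest : ∀ x y z : T, y ≤ x → z ≤ x → y ≤ z ∨ z ≤ y)
    (L : Set T) (hL : ∀ m ∈ L, ∀ y : T, m ≤ y → y = m) :
    ∃ (T' : Type) (_ : Finite T') (po : PartialOrder T')
      (e : T → T') (r : T' → T) (N : ℕ),
      -- `T'` is a forest poset
      (∀ x y z : T', po.le y x → po.le z x → po.le y z ∨ po.le z y) ∧
      -- `e` is an order embedding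
      (∀ a b : T, a ≤ b ↔ po.le (e a) (e b)) ∧
      -- `r` is monotone
      (∀ a b : T', po.le a b → r a ≤ r b) ∧
      -- `r ∘ e = id`
      (∀ t : T, r (e t) = t) ∧
      -- (i) every element of `T'` not in the image of `e` sits strictly
      -- above a designated leaf
      (∀ t' : T', (¬∃ t : T, e t = t') → r t' ∈ L ∧ po.lt (e (r t')) t') ∧
      -- (ii) every maximal element of `T'` over a designated leaf has
      -- exactly `N` elements strictly below it
      (∀ m : T', (∀ y : T', po.le m y → y = m) → r m ∈ L →
        {y : T' | po.lt y m}.ncard = N) ∧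
      -- (iii) every maximal element of `T'` not over a designated leaf comes
      -- from `T` and has fewer than `N` elements strictly below it
      (∀ m : T', (∀ y : T', po.le m y → y = m) → r m ∉ L →
        (∃ t : T, e t = m) ∧ {y : T' | po.lt y m}.ncard < N) := by
  classical
  set N : ℕ := Fintype.card T with hNdef
  set h : T → ℕ := fun t => {y : T | y < t}.ncard with hhdef
  have hhlt : ∀ t : T, h t < N := by
    intro t
    have hsub : {y : T | y < t} ⊂ Set.univ := by
      constructor
      · exact Set.subset_univ _
      · intro hcon
        exact lt_irrefl t (hcon (Set.mem_univ t))
    have := Set.ncard_lt_ncard hsub Set.finite_univ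
    simpa [Set.ncard_univ, hNdef] using this
  set P : T × ℕ → Prop := fun p => p.1 ∈ L ∧ p.2 < N - h p.1 with hPdef
  have finG : Finite (Graft T P) :=
    Graft.finite N (fun p hp => lt_of_lt_of_le hp.2 (Nat.sub_le _ _))
  refine ⟨Graft T P, finG, Graft.po P, Graft.base, Graft.ret, N,
    ?_, ?_, ?_, ?_, ?_, ?_, ?_⟩
  · -- forest
    intro x y z hyx hzx
    cases x with
    | base a =>
        cases y with
        | base b =>
            cases z with
            | base c => exact hforest a b c hyx hzx
            | chain q hq => exact False.elim hzx
        | chain p hp => exact False.elim hyx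
    | chain p hp =>
        cases y with
        | base b =>
            cases z with
            | base c => exact hforest p.1 b c hyx hzx
            | chain q hq =>
                have hzx' : q.1 = p.1 ∧ q.2 ≤ p.2 := hzx
                have hyx' : b ≤ p.1 := hyx
                exact Or.inl (show b ≤ q.1 by rw [hzx'.1]; exact hyx')
        | chain qy hqy =>
            cases z with
            | base c =>
                have hyx' : qy.1 = p.1 ∧ qy.2 ≤ p.2 := hyx
                have hzx' : c ≤ p.1 := hzx
                exact Or.inr (show c ≤ qy.1 by rw [hyx'.1]; exact hzx')
            | chain qz hqz =>
                have hyx' : qy.1 = p.1 ∧ qy.2 ≤ p.2 := hyx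
                have hzx' : qz.1 = p.1 ∧ qz.2 ≤ p.2 := hzx
                rcases le_total qy.2 qz.2 with hle | hle
                · exact Or.inl ⟨hyx'.1.trans hzx'.1.symm, hle⟩
                · exact Or.inr ⟨hzx'.1.trans hyx'.1.symm, hle⟩
  · -- embedding
    intro a b
    exact Iff.rfl
  · -- r monotone
    intro a b hab
    cases a with
    | base x =>
        cases b with
        | base y => exact hab
        | chain q hq => exact hab
    | chain p hp =>
        cases b with
        | base y => exact False.elim hab
        | chain q hq =>
            have hab' : p.1 = q.1 ∧ p.2 ≤ q.2 := hab
            exact le_of_eq hab'.1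
  · -- retraction
    intro t
    rfl
  · -- (i)
    intro t' ht'
    cases t' with
    | base a => exact absurd ⟨a, rfl⟩ ht'
    | chain p hp =>
        exact ⟨hp.1, le_refl p.1, fun hcon => hcon⟩
  · -- (ii)
    intro m hmax hrm
    cases m with
    | base t =>
        exfalso
        have hrm' : t ∈ L := hrm
        have hpos : 0 < N - h t := Nat.sub_pos_of_lt (hhlt t)
        have hc : P (t, 0) := ⟨hrm', hpos⟩
        have := hmax (Graft.chain (t, 0) hc) (le_refl t)
        exact (by cases this)
    | chain p hp =>
        obtain ⟨l, i⟩ := p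
        have hl : l ∈ L := hp.1
        have hi : i < N - h l := hp.2
        -- maximality forces i = N - h l - 1
        have hitop : i = N - h l - 1 := by
          by_contra hne
          have hi1 : i + 1 < N - h l := by omega
          have hc' : P (l, i + 1) := ⟨hl, hi1⟩
          have hle : Graft.grle (P := P) (Graft.chain (l, i) hp)
              (Graft.chain (l, i + 1) hc') := ⟨rfl, Nat.le_succ i⟩
          have heq := hmax _ hle
          have : i + 1 = i := by
            have := congrArg Graft.coord heq
            simpa [Graft.coord] using this
          omega
        -- the set of elements strictly below the chain top
        set S2 : Set (Graft T P) :=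
          {d : Graft T P | ∃ (q : T × ℕ) (hq : P q),
            d = Graft.chain q hq ∧ q.1 = l ∧ q.2 < i} with hS2def
        have hset : {y : Graft T P | (Graft.po P).lt y (Graft.chain (l, i) hp)} =
            (Graft.base '' {y : T | y ≤ l}) ∪ S2 := by
          ext y
          cases y with
          | base b =>
              simp only [Set.mem_setOf_eq, Set.mem_union, Set.mem_image, hS2def]
              constructor
              · intro hy
                have hy' : b ≤ l ∧ ¬ False := hy
                exact Or.inl ⟨b, hy'.1, rfl⟩
              · rintro (⟨b', hb', hbe⟩ | ⟨q, hq, hde, _⟩)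
                · cases hbe
                  exact ⟨hb', fun hcon => hcon⟩
                · exact (by cases hde)
          | chain q hq =>
              simp only [Set.mem_setOf_eq, Set.mem_union, Set.mem_image, hS2def]
              constructor
              · intro hy
                have hy' : (q.1 = l ∧ q.2 ≤ i) ∧ ¬ (l = q.1 ∧ i ≤ q.2) := hy
                refine Or.inr ⟨q, hq, rfl, hy'.1.1, ?_⟩
                rcases Nat.lt_or_ge q.2 i with hlt | hge
                · exact hlt
                · exact absurd ⟨hy'.1.1.symm, hge⟩ hy'.2
              · rintro (⟨b', _, hbe⟩ | ⟨q', hq', hde, hq'1, hq'2⟩)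
                · exact (by cases hbe)
                · obtain rfl : q = q' := by injection hde
                  exact ⟨⟨hq'1, le_of_lt hq'2⟩,
                    fun hcon => absurd hcon.2 (Nat.not_le.mpr hq'2)⟩
        rw [hset]
        have hdisj : Disjoint (Graft.base '' {y : T | y ≤ l}) S2 := by
          rw [Set.disjoint_left]
          rintro x ⟨b, _, rfl⟩ ⟨q, hq, hde, _⟩
          exact (by cases hde)
        rw [Set.ncard_union_eq hdisj (Set.toFinite _) (Set.toFinite _),
          Set.ncard_image_of_injective _ Graft.base_injective]
        have h1 : {y : T | y ≤ l}.ncard = h l + 1 := by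
          have : {y : T | y ≤ l} = insert l {y : T | y < l} := by
            ext y
            simp [le_iff_lt_or_eq, or_comm]
          rw [this, Set.ncard_insert_of_notMem (by simp) (Set.toFinite _)]
        have h2 : S2.ncard = i := by
          have hinjOn : Set.InjOn Graft.coord S2 := by
            rintro d ⟨q, hq, rfl, hq1, _⟩ d' ⟨q', hq', rfl, hq'1, _⟩ hdd
            have hdd' : q.2 = q'.2 := hdd
            obtain rfl : q = q' := Prod.ext (hq1.trans hq'1.symm) hdd'
            rfl
          have himg : Graft.coord '' S2 = Set.Iio i := by
            ext j
            simp only [Set.mem_image, hS2def, Set.mem_setOf_eq, Set.mem_Iio]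
            constructor
            · rintro ⟨d, ⟨q, hq, rfl, _, hq2⟩, rfl⟩
              exact hq2
            · intro hj
              have hPj : P (l, j) := ⟨hl, show j < N - h l by omega⟩
              exact ⟨Graft.chain (l, j) hPj, ⟨(l, j), hPj, rfl, rfl, hj⟩, rfl⟩
          have := Set.ncard_image_of_injOn hinjOn
          rw [himg] at this
          rw [← this, Set.ncard_eq_toFinset_card']
          simp
        rw [h1, h2]
        have := hhlt l
        omega
  · -- (iii)
    intro m hmax hrm
    cases m with
    | base t =>
        refine ⟨⟨t, rfl⟩, ?_⟩
        have hset : {y : Graft T P | (Graft.po P).lt y (Graft.base t)} =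
            Graft.base '' {y : T | y < t} := by
          ext y
          cases y with
          | base b =>
              simp only [Set.mem_setOf_eq, Set.mem_image]
              constructor
              · intro hy
                have hy' : b ≤ t ∧ ¬ t ≤ b := hy
                exact ⟨b, lt_of_le_not_ge hy'.1 hy'.2, rfl⟩
              · rintro ⟨b', hb', hbe⟩
                cases hbe
                exact ⟨le_of_lt hb', fun hcon => absurd (le_antisymm hcon hb'.le)
                  (ne_of_gt hb')⟩
          | chain q hq =>
              simp only [Set.mem_setOf_eq, Set.mem_image]
              constructor
              · intro hy
                have hy' : False ∧ ¬ (t ≤ q.1) := hy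
                exact hy'.1.elim
              · rintro ⟨b', _, hbe⟩
                exact (by cases hbe)
        rw [hset, Set.ncard_image_of_injective _ Graft.base_injective]
        exact hhlt t
    | chain p hp =>
        exact absurd hp.1 hrm
end

section
/- Let G be a group acting on sets M, N, and S, let f : M → N be a G-equivariant map, and suppose S contains an element s₀ whose stabilizer is trivial (for all g ∈ G, g • s₀ = s₀ implies g = 1). Equip M × S and N × S with the diagonal G-actions and consider the induced map F between the quotients (M × S)/G → (N × S)/G sending the orbit of (m,s) to the orbit of (f m, s). If F is a bijection, then f is a bijection. (This is the set-theoretic heart of the final step of the paper's proof of the reconstruction theorem: comparing free algebras via the colimit formula F_r(X)(d) = P(r∘γ,d) ×_{Aut_I(J)} Hom_I(J,X) and testing against suitable X forces the map of operation spaces P(r∘γ,d) → Q(r∘γ,d) to be an equivalence.) -/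
/-- Let `G` act on sets `M`, `N`, `S`, let `f : M → N` be `G`-equivariant,
and suppose `S` has a point `s₀` with trivial stabilizer.  If the induced map
`F : (M × S)/G → (N × S)/G`, sending the orbit of `(m,s)` to the orbit of
`(f m, s)` (for the diagonal actions), is a bijection, then `f` is a
bijection. -/
theorem bijective_of_quotient_prod_bijective
    (G : Type*) [Group G] (M N S : Type*)
    [MulAction G M] [MulAction G N] [MulAction G S]
    (f : M → N) (hf : ∀ (g : G) (m : M), f (g • m) = g • f m)
    (s₀ : S) (hs₀ : ∀ g : G, g • s₀ = s₀ → g = 1)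
    (F : Quotient (MulAction.orbitRel G (M × S)) →
      Quotient (MulAction.orbitRel G (N × S)))
    (hF : ∀ (m : M) (s : S),
      F (Quotient.mk (MulAction.orbitRel G (M × S)) (m, s)) =
        Quotient.mk (MulAction.orbitRel G (N × S)) (f m, s))
    (hbij : Function.Bijective F) :
    Function.Bijective f := by
  constructor
  · intro m m' h
    have h1 : F (Quotient.mk (MulAction.orbitRel G (M × S)) (m, s₀)) =
        F (Quotient.mk (MulAction.orbitRel G (M × S)) (m', s₀)) := by
      rw [hF, hF, h]
    have h2 := Quotient.exact (hbij.1 h1)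
    obtain ⟨g, hg⟩ := h2
    have hgs : g • s₀ = s₀ := congrArg Prod.snd hg
    have : g = 1 := hs₀ g hgs
    have hm : g • m' = m := congrArg Prod.fst hg
    rw [this, one_smul] at hm
    exact hm.symm
  · intro n
    obtain ⟨q, hq⟩ := hbij.2 (Quotient.mk (MulAction.orbitRel G (N × S)) (n, s₀))
    obtain ⟨⟨m, s⟩, rfl⟩ := Quotient.exists_rep q
    rw [hF] at hq
    obtain ⟨g, hg⟩ := Quotient.exact hq
    have hgs : g • s₀ = s := congrArg Prod.snd hg
    have hgn : g • n = f m := congrArg Prod.fst hg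
    exact ⟨g⁻¹ • m, by rw [hf, hgn.symm, inv_smul_smul]⟩
end

section
/- Let J be a finite type, I a type, γ : J → I a map, and X : I → Type a family of types such that for each i ∈ I there exists an injection from the fiber {j : J // γ j = i} into X i. Let G be the group of permutations σ of J with γ ∘ σ = γ, acting on the set S = ∀ j, X (γ j) by (σ • h) j = h (σ⁻¹ j). Then S contains an element whose stabilizer in G is trivial, namely any h that is injective on each fiber of γ. (This is the choice, in the paper's proof of the reconstruction theorem, of a family X with each X i finite of cardinality at least |γ⁻¹(i)|, producing a point of Hom_I(J,X) that is free for the Aut_I(J)-action.) -/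
/-- Let `J` be a finite type, `γ : J → I`, and `X : I → Type` a family such
that each fiber of `γ` injects into the corresponding `X i`.  Let
`G = Aut_I(J)` be the group of permutations `σ` of `J` with `γ ∘ σ = γ`,
acting on `S = ∀ j, X (γ j)` by `(σ • h) j = h (σ⁻¹ j)`.  Then `S` contains an
element with trivial stabilizer in `G`: namely, there exists an `h` injective
on each fiber of `γ`, and any such `h` has trivial stabilizer. -/
theorem exists_free_point_of_fiberwise_injections
    (J I : Type*) [Finite J] (γ : J → I) (X : I → Type*)
    (hX : ∀ i : I, ∃ u : {j : J // γ j = i} → X i, Function.Injective u) :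
    (∃ h : ∀ j, X (γ j),
      ∀ j j' : J, γ j = γ j' → HEq (h j) (h j') → j = j') ∧
    (∀ h : ∀ j, X (γ j),
      (∀ j j' : J, γ j = γ j' → HEq (h j) (h j') → j = j') →
      ∀ σ : Equiv.Perm J, γ ∘ σ = γ →
        (∀ j : J, HEq (h (σ⁻¹ j)) (h j)) → σ = 1) := by
  constructor
  · choose u hu using hX
    have tr : ∀ (i i' : I) (e : i = i') (k : J) (hk : γ k = i) (hk' : γ k = i'),
        HEq (u i ⟨k, hk⟩) (u i' ⟨k, hk'⟩) := by
      rintro i i' rfl k hk hk'; rfl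
    refine ⟨fun j => u (γ j) ⟨j, rfl⟩, ?_⟩
    intro j j' hγ hheq
    have key : u (γ j) ⟨j, rfl⟩ = u (γ j) ⟨j', hγ.symm⟩ :=
      eq_of_heq (hheq.trans (tr (γ j') (γ j) hγ.symm j' rfl hγ.symm))
    exact congrArg Subtype.val (hu (γ j) key)
  · intro h hinj σ hσ hfix
    ext j
    have hγ : γ (σ⁻¹ j) = γ j := by
      conv_rhs => rw [← Equiv.apply_symm_apply σ j]
      exact (congrFun hσ (σ⁻¹ j)).symm
    have := hinj _ _ hγ (hfix j)
    simpa using (congrArg σ this).symm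
end
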